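/- Suppose the distance between tiles t₁, t₂ with δ₀(t₁) = δ₀(t₂) = n is computed as follows: if for some d ≤ n the leftmost/rightmost ancestors of t₁ and of t₂ in ring R_{n-d} coincide we output 2d, and if they are merely adjacent we output 2d+1. If the algorithm outputs a value at the first (smallest) such d, then this value is a correct upper bound on the graph distance δ(t₁,t₂): there exists a path of that length consisting of d parent edges from t₁, at most one sibling edge, and d child edges to t₂. -/

import Mathlib

/-!
A parent map moves along an edge and one ring inward, so as long as `d` does not exceed the ring
of `t`, the `d`-th ancestor of `t` is reached by a walk of length `d`. Splicing the two ancestor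
walks of `t₁` and `t₂` at a common ancestor, or across the edge joining adjacent ancestors, gives
a walk of length `2d`, resp. `2d + 1`.
-/

namespace SimpleGraph

variable {V : Type*} (G : SimpleGraph V) (ring : V → ℕ)

theorem exists_walk_iterate_length (f : V → V)
    (hf : ∀ v : V, 1 ≤ ring v → G.Adj v (f v) ∧ ring (f v) = ring v - 1) :
    ∀ (d : ℕ) (v : V), d ≤ ring v → ∃ w : G.Walk v (f^[d] v), w.length = d
  | 0, v, _ => ⟨Walk.nil, rfl⟩
  | d + 1, v, hv => by
    obtain ⟨hadj, hring⟩ := hf v (by omega)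
    obtain ⟨w, hw⟩ := exists_walk_iterate_length f hf d (f v) (by omega)
    rw [Function.iterate_succ_apply]
    exact ⟨Walk.cons hadj w, by rw [Walk.length_cons, hw]⟩

theorem exists_walk_to_ancestor {pL pR : V → V}
    (hL : ∀ v : V, 1 ≤ ring v → G.Adj v (pL v) ∧ ring (pL v) = ring v - 1)
    (hR : ∀ v : V, 1 ≤ ring v → G.Adj v (pR v) ∧ ring (pR v) = ring v - 1)
    {d : ℕ} {t a : V} (hd : d ≤ ring t) (ha : a = pL^[d] t ∨ a = pR^[d] t) :
    ∃ w : G.Walk t a, w.length = d := by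
  rcases ha with rfl | rfl
  · exact G.exists_walk_iterate_length ring pL hL d t hd
  · exact G.exists_walk_iterate_length ring pR hR d t hd

variable {G}

theorem exists_walk_length_and_dist_le {u v : V} {k : ℕ} (h : ∃ w : G.Walk u v, w.length = k) :
    (∃ w : G.Walk u v, w.length = k) ∧ G.dist u v ≤ k :=
  ⟨h, by obtain ⟨w, rfl⟩ := h; exact dist_le w⟩

end SimpleGraph

open SimpleGraph in
/-- Correctness of the distance algorithm's upper bound for tiles on the same ring.
In the tessellation graph, each non-central tile `v` has a left parent `pL v` and a
right parent `pR v` on the previous ring, both adjacent to `v`.  Let `t₁, t₂` be tiles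
with `δ₀(t₁) = δ₀(t₂) = n` and let `d ≤ n`.  If an ancestor of `t₁` at ring `n - d`
(obtained by iterating `pL` or `pR`) coincides with such an ancestor of `t₂`, then
there is a walk from `t₁` to `t₂` of length `2d` (`d` parent edges and `d` child
edges); if the two ancestors are merely adjacent (one sibling edge in between), then
there is a walk of length `2d + 1`.  In particular these outputs are correct upper
bounds on the graph distance `δ(t₁,t₂)`. -/
theorem stmt_16 {V : Type*} (G : SimpleGraph V) (ring : V → ℕ) (pL pR : V → V)
    (hL : ∀ v : V, 1 ≤ ring v → G.Adj v (pL v) ∧ ring (pL v) = ring v - 1)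
    (hR : ∀ v : V, 1 ≤ ring v → G.Adj v (pR v) ∧ ring (pR v) = ring v - 1)
    (t₁ t₂ : V) (n d : ℕ) (h₁ : ring t₁ = n) (h₂ : ring t₂ = n) (hd : d ≤ n) :
    (∀ a b : V, (a = pL^[d] t₁ ∨ a = pR^[d] t₁) → (b = pL^[d] t₂ ∨ b = pR^[d] t₂) →
        a = b → (∃ w : G.Walk t₁ t₂, w.length = 2 * d) ∧ G.dist t₁ t₂ ≤ 2 * d) ∧
      (∀ a b : V, (a = pL^[d] t₁ ∨ a = pR^[d] t₁) → (b = pL^[d] t₂ ∨ b = pR^[d] t₂) →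
        G.Adj a b → (∃ w : G.Walk t₁ t₂, w.length = 2 * d + 1) ∧
          G.dist t₁ t₂ ≤ 2 * d + 1) := by
  have hd₁ : d ≤ ring t₁ := h₁ ▸ hd
  have hd₂ : d ≤ ring t₂ := h₂ ▸ hd
  constructor
  · rintro a b ha hb rfl
    obtain ⟨w₁, hw₁⟩ := G.exists_walk_to_ancestor ring hL hR hd₁ ha
    obtain ⟨w₂, hw₂⟩ := G.exists_walk_to_ancestor ring hL hR hd₂ hb
    refine exists_walk_length_and_dist_le ⟨w₁.append w₂.reverse, ?_⟩
    rw [Walk.length_append, Walk.length_reverse, hw₁, hw₂, two_mul]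
  · rintro a b ha hb hab
    obtain ⟨w₁, hw₁⟩ := G.exists_walk_to_ancestor ring hL hR hd₁ ha
    obtain ⟨w₂, hw₂⟩ := G.exists_walk_to_ancestor ring hL hR hd₂ hb
    refine exists_walk_length_and_dist_le ⟨w₁.append (Walk.cons hab w₂.reverse), ?_⟩
    rw [Walk.length_append, Walk.length_cons, Walk.length_reverse, hw₁, hw₂]
    omega
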